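/- Let A, B be positive definite n×n complex matrices, λ ∈ (0,1], and T_λ(A|B) = (A #_λ B - A)/λ where A #_λ B = A^(1/2)(A^(-1/2) B A^(-1/2))^λ A^(1/2). Then A - A B⁻¹ A ≤ T_λ(A|B) ≤ B - A in the Loewner order, and T_λ(A|B) = 0 if and only if A = B. -/

import Mathlib

open Matrix
open scoped ComplexOrder

attribute [local instance] Matrix.frobeniusNormedAddCommGroup Matrix.frobeniusNormedSpace

/-- Matrix logarithm via the continuous functional calculus (spectral theorem). -/
noncomputable def mlog {n : Type*} [Fintype n] [DecidableEq n] (A : Matrix n n ℂ) :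
    Matrix n n ℂ := cfc Real.log A

/-- Real power of a matrix via the continuous functional calculus (spectral theorem). -/
noncomputable def mpow {n : Type*} [Fintype n] [DecidableEq n] (A : Matrix n n ℂ) (r : ℝ) :
    Matrix n n ℂ := cfc (fun x : ℝ => x ^ r) A

/-! With `C = A^{-1/2} B A^{-1/2}`, the three matrices `A - A B⁻¹ A`, `T_λ(A|B)` and `B - A` are
the congruences `A^{1/2} f(C) A^{1/2}` for `f x = 1 - x⁻¹`, `(x^λ - 1)/λ` and `x - 1`. The scalar
inequalities between these functions on the (positive) spectrum of `C` become Loewner inequalities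
by monotonicity of the functional calculus, and congruence by the invertible `A^{1/2}` preserves
them. Likewise `T_λ(A|B) = 0` iff `(x^λ - 1)/λ` vanishes on the spectrum of `C`, i.e. `C = 1`,
i.e. `A = B`. -/

open scoped MatrixOrder

noncomputable def tsallisLog (l x : ℝ) : ℝ := l⁻¹ * (x ^ l - 1)

lemma one_sub_inv_le_tsallisLog {l x : ℝ} (hl : 0 < l) (hx : 0 < x) :
    1 - x⁻¹ ≤ tsallisLog l x := by
  have hlog : l * (1 - x⁻¹) ≤ l * Real.log x :=
    mul_le_mul_of_nonneg_left (Real.one_sub_inv_le_log_of_pos hx) hl.le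
  have hexp : l * Real.log x + 1 ≤ x ^ l := by
    rw [Real.rpow_def_of_pos hx, mul_comm]
    exact Real.add_one_le_exp _
  rw [tsallisLog, le_inv_mul_iff₀ hl]
  linarith

lemma tsallisLog_le_sub_one {l x : ℝ} (hl : 0 < l) (hl1 : l ≤ 1) (hx : 0 ≤ x) :
    tsallisLog l x ≤ x - 1 := by
  have hbernoulli := rpow_one_add_le_one_add_mul_self (s := x - 1) (by linarith) hl.le hl1
  rw [add_sub_cancel] at hbernoulli
  rw [tsallisLog, inv_mul_le_iff₀ hl]
  linarith

lemma tsallisLog_eq_zero_iff {l x : ℝ} (hl : l ≠ 0) (hx : 0 ≤ x) :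
    tsallisLog l x = 0 ↔ x = 1 := by
  rw [tsallisLog, mul_eq_zero, inv_eq_zero, sub_eq_zero, ← Real.one_rpow l,
    Real.rpow_left_inj hx zero_le_one hl]
  simp [hl]

section mpow

variable {n : Type*} [Fintype n] [DecidableEq n]

/-- Registered with `fun_prop`, so that `cfc_cont_tac` discharges every continuity side goal of the
functional calculus on matrices. -/
@[fun_prop]
lemma Matrix.continuousOn_spectrum (A : Matrix n n ℂ) (f : ℝ → ℝ) :
    ContinuousOn f (spectrum ℝ A) :=
  Matrix.finite_real_spectrum.continuousOn f

lemma isHermitian_mpow (A : Matrix n n ℂ) (r : ℝ) : (mpow A r).IsHermitian :=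
  cfc_predicate _ A

lemma mpow_zero {A : Matrix n n ℂ} (hA : A.IsHermitian) : mpow A 0 = 1 := by
  simpa [mpow] using cfc_const_one ℝ A

lemma mpow_one {A : Matrix n n ℂ} (hA : A.IsHermitian) : mpow A 1 = A := by
  simpa [mpow] using cfc_id' ℝ A

lemma mpow_add {A : Matrix n n ℂ} (hA : A.PosDef) (r s : ℝ) :
    mpow A (r + s) = mpow A r * mpow A s := by
  rw [mpow, mpow, mpow, ← cfc_mul ..]
  exact cfc_congr fun x hx => Real.rpow_add (hA.isStrictlyPositive.spectrum_pos hx) r s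

end mpow

section TsallisRelEntropy

variable {n : Type*} [Fintype n] [DecidableEq n] {A B : Matrix n n ℂ}

/-- The paper's `A #_λ B`. -/
noncomputable def geomMean (A B : Matrix n n ℂ) (l : ℝ) : Matrix n n ℂ :=
  mpow A (1/2) * mpow (mpow A (-(1/2)) * B * mpow A (-(1/2))) l * mpow A (1/2)

/-- The paper's `T_λ(A|B)`. -/
noncomputable def tsallisRelEntropy (A B : Matrix n n ℂ) (l : ℝ) : Matrix n n ℂ :=
  l⁻¹ • (geomMean A B l - A)

lemma mpow_half_mul_mpow_half (hA : A.PosDef) : mpow A (1/2) * mpow A (1/2) = A := by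
  rw [← mpow_add hA, add_halves, mpow_one hA.isHermitian]

lemma mpow_half_mul_mpow_neg_half (hA : A.PosDef) : mpow A (1/2) * mpow A (-(1/2)) = 1 := by
  rw [← mpow_add hA, add_neg_cancel, mpow_zero hA.isHermitian]

lemma mpow_neg_half_mul_mpow_half (hA : A.PosDef) : mpow A (-(1/2)) * mpow A (1/2) = 1 := by
  rw [← mpow_add hA, neg_add_cancel, mpow_zero hA.isHermitian]

lemma isHermitian_mpow_neg_half_mul_mul (A : Matrix n n ℂ) (hB : B.IsHermitian) :
    (mpow A (-(1/2)) * B * mpow A (-(1/2))).IsHermitian := by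
  have h := isHermitian_conjTranspose_mul_mul (mpow A (-(1/2))) hB
  rwa [(isHermitian_mpow A _).eq] at h

lemma posDef_mpow_neg_half_mul_mul (hA : A.PosDef) (hB : B.PosDef) :
    (mpow A (-(1/2)) * B * mpow A (-(1/2))).PosDef := by
  have hT : IsUnit (mpow A (-(1/2))) :=
    ⟨⟨_, _, mpow_neg_half_mul_mpow_half hA, mpow_half_mul_mpow_neg_half hA⟩, rfl⟩
  simpa only [(isHermitian_mpow A _).eq] using
    hB.conjTranspose_mul_mul_same (mulVec_injective_iff_isUnit.mpr hT)

lemma mpow_half_mul_mpow_neg_half_mul_mul (hA : A.PosDef) (B : Matrix n n ℂ) :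
    mpow A (1/2) * (mpow A (-(1/2)) * B * mpow A (-(1/2))) * mpow A (1/2) = B := by
  calc _ = mpow A (1/2) * mpow A (-(1/2)) * B * (mpow A (-(1/2)) * mpow A (1/2)) := by
        simp only [mul_assoc]
    _ = B := by
        rw [mpow_half_mul_mpow_neg_half hA, mpow_neg_half_mul_mpow_half hA, one_mul, mul_one]

lemma mpow_neg_half_mul_mul_eq_one_iff (hA : A.PosDef) :
    mpow A (-(1/2)) * B * mpow A (-(1/2)) = 1 ↔ A = B := by
  constructor
  · intro h
    rw [← mpow_half_mul_mpow_neg_half_mul_mul hA B, h, mul_one, mpow_half_mul_mpow_half hA]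
  · rintro rfl
    calc _ = mpow A (-(1/2)) * (mpow A (1/2) * mpow A (1/2)) * mpow A (-(1/2)) := by
          rw [mpow_half_mul_mpow_half hA]
      _ = mpow A (-(1/2)) * mpow A (1/2) * (mpow A (1/2) * mpow A (-(1/2))) := by
          simp only [mul_assoc]
      _ = 1 := by rw [mpow_half_mul_mpow_neg_half hA, mpow_neg_half_mul_mpow_half hA, one_mul]

lemma inv_mpow_neg_half_mul_mul (hA : A.PosDef) (hB : B.PosDef) :
    (mpow A (-(1/2)) * B * mpow A (-(1/2)))⁻¹ = mpow A (1/2) * B⁻¹ * mpow A (1/2) := by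
  apply inv_eq_left_inv
  calc _ = mpow A (1/2) * B⁻¹ * (mpow A (1/2) * mpow A (-(1/2))) * B * mpow A (-(1/2)) := by
        simp only [mul_assoc]
    _ = mpow A (1/2) * (B⁻¹ * B) * mpow A (-(1/2)) := by
        rw [mpow_half_mul_mpow_neg_half hA, mul_one, mul_assoc _ B⁻¹ B]
    _ = 1 := by
        rw [nonsing_inv_mul B ((isUnit_iff_isUnit_det B).mp hB.isUnit), mul_one,
          mpow_half_mul_mpow_neg_half hA]

lemma cfc_inv_eq_inv {C : Matrix n n ℂ} (hC : C.PosDef) :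
    cfc (fun x : ℝ => x⁻¹) C = C⁻¹ := by
  rw [nonsing_inv_eq_ringInverse]
  exact cfc_ringInverse_id C hC.isUnit

lemma tsallisRelEntropy_eq_mpow_half_mul_cfc_mul (hA : A.PosDef) (hB : B.IsHermitian) (l : ℝ) :
    tsallisRelEntropy A B l =
      mpow A (1/2) * cfc (tsallisLog l) (mpow A (-(1/2)) * B * mpow A (-(1/2))) * mpow A (1/2) := by
  set C := mpow A (-(1/2)) * B * mpow A (-(1/2))
  -- `hC` is picked up by `cfc_tac` in the rewrites below.
  have hC : IsSelfAdjoint C := (isHermitian_mpow_neg_half_mul_mul A hB).isSelfAdjoint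
  have hcfc : cfc (tsallisLog l) C = l⁻¹ • (mpow C l - 1) := by
    rw [mpow, ← cfc_const_one ℝ C, ← cfc_sub .., ← cfc_const_mul ..]
    rfl
  rw [hcfc, tsallisRelEntropy, geomMean, mul_smul_comm, smul_mul_assoc, mul_sub, sub_mul, mul_one,
    mpow_half_mul_mpow_half hA]

lemma sub_eq_mpow_half_mul_cfc_mul (hA : A.PosDef) (hB : B.IsHermitian) :
    B - A = mpow A (1/2) * cfc (fun x : ℝ => x - 1) (mpow A (-(1/2)) * B * mpow A (-(1/2))) *
      mpow A (1/2) := by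
  have hC := (isHermitian_mpow_neg_half_mul_mul A hB).isSelfAdjoint
  rw [cfc_sub .., cfc_id' .., cfc_const_one .., mul_sub, sub_mul, mul_one,
    mpow_half_mul_mpow_half hA, mpow_half_mul_mpow_neg_half_mul_mul hA]

lemma sub_mul_inv_mul_eq_mpow_half_mul_cfc_mul (hA : A.PosDef) (hB : B.PosDef) :
    A - A * B⁻¹ * A =
      mpow A (1/2) * cfc (fun x : ℝ => 1 - x⁻¹) (mpow A (-(1/2)) * B * mpow A (-(1/2))) *
        mpow A (1/2) := by
  have hC := (isHermitian_mpow_neg_half_mul_mul A hB.isHermitian).isSelfAdjoint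
  rw [cfc_sub .., cfc_const_one .., cfc_inv_eq_inv (posDef_mpow_neg_half_mul_mul hA hB),
    inv_mpow_neg_half_mul_mul hA hB, mul_sub, sub_mul, mul_one, mpow_half_mul_mpow_half hA]
  simp only [mul_assoc]
  rw [mpow_half_mul_mpow_half hA, ← mul_assoc (mpow A (1/2)) (mpow A (1/2)),
    mpow_half_mul_mpow_half hA]

lemma cfc_tsallisLog_eq_zero_iff {C : Matrix n n ℂ} (hC : C.PosDef) {l : ℝ} (hl : l ≠ 0) :
    cfc (tsallisLog l) C = 0 ↔ C = 1 := by
  have hCsa := hC.isHermitian.isSelfAdjoint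
  conv_rhs => rw [← cfc_id' ℝ C, ← cfc_const_one ℝ C]
  rw [← cfc_const_zero ℝ C, cfc_eq_cfc_iff_eqOn, cfc_eq_cfc_iff_eqOn]
  exact forall₂_congr fun x hx =>
    tsallisLog_eq_zero_iff hl (hC.isStrictlyPositive.spectrum_pos hx).le

lemma sub_mul_inv_mul_le_tsallisRelEntropy (hA : A.PosDef) (hB : B.PosDef) {l : ℝ} (hl : 0 < l) :
    A - A * B⁻¹ * A ≤ tsallisRelEntropy A B l := by
  have hC := posDef_mpow_neg_half_mul_mul hA hB
  rw [sub_mul_inv_mul_eq_mpow_half_mul_cfc_mul hA hB,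
    tsallisRelEntropy_eq_mpow_half_mul_cfc_mul hA hB.isHermitian]
  exact (isHermitian_mpow A _).isSelfAdjoint.conjugate_le_conjugate <|
    cfc_mono fun x hx => one_sub_inv_le_tsallisLog hl (hC.isStrictlyPositive.spectrum_pos hx)

lemma tsallisRelEntropy_le_sub (hA : A.PosDef) (hB : B.PosDef) {l : ℝ} (hl : 0 < l)
    (hl1 : l ≤ 1) :
    tsallisRelEntropy A B l ≤ B - A := by
  have hC := posDef_mpow_neg_half_mul_mul hA hB
  rw [sub_eq_mpow_half_mul_cfc_mul hA hB.isHermitian,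
    tsallisRelEntropy_eq_mpow_half_mul_cfc_mul hA hB.isHermitian]
  exact (isHermitian_mpow A _).isSelfAdjoint.conjugate_le_conjugate <|
    cfc_mono fun x hx => tsallisLog_le_sub_one hl hl1 (hC.isStrictlyPositive.spectrum_pos hx).le

lemma tsallisRelEntropy_eq_zero_iff (hA : A.PosDef) (hB : B.PosDef) {l : ℝ} (hl : l ≠ 0) :
    tsallisRelEntropy A B l = 0 ↔ A = B := by
  have hS : IsUnit (mpow A (1/2)) :=
    ⟨⟨_, _, mpow_half_mul_mpow_neg_half hA, mpow_neg_half_mul_mpow_half hA⟩, rfl⟩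
  rw [tsallisRelEntropy_eq_mpow_half_mul_cfc_mul hA hB.isHermitian, hS.mul_left_eq_zero,
    hS.mul_right_eq_zero, cfc_tsallisLog_eq_zero_iff (posDef_mpow_neg_half_mul_mul hA hB) hl,
    mpow_neg_half_mul_mul_eq_one_iff hA]

end TsallisRelEntropy

theorem stmt_19 {n : Type*} [Fintype n] [DecidableEq n]
    (A B : Matrix n n ℂ) (hA : A.PosDef) (hB : B.PosDef) (l : ℝ) (hl : 0 < l) (hl1 : l ≤ 1) :
    ((l⁻¹ • (mpow A (1/2) * mpow (mpow A (-(1/2)) * B * mpow A (-(1/2))) l * mpow A (1/2) - A)) -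
        (A - A * B⁻¹ * A)).PosSemidef ∧
      ((B - A) -
        l⁻¹ • (mpow A (1/2) * mpow (mpow A (-(1/2)) * B * mpow A (-(1/2))) l * mpow A (1/2) - A)).PosSemidef ∧
      (l⁻¹ • (mpow A (1/2) * mpow (mpow A (-(1/2)) * B * mpow A (-(1/2))) l * mpow A (1/2) - A) = 0
        ↔ A = B) :=
  ⟨le_iff.mp (sub_mul_inv_mul_le_tsallisRelEntropy hA hB hl),
    le_iff.mp (tsallisRelEntropy_le_sub hA hB hl hl1),
    tsallisRelEntropy_eq_zero_iff hA hB hl.ne'⟩
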